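/- For all n, p ∈ ℕ, the series Σ_{k=0}^{∞} π_n(k) π_p(k) w(k) converges and equals 1/γ_n² if n = p, and equals 0 if n ≠ p. -/

import Mathlib

/-!
Summing `(-x)_j (a)_x c^x / x!` over `x` gives a shifted binomial series, so for the test
polynomials `(x + β)_k`
`∑ₓ m_n(x) (x + β)_k w(x) = Γ(β) (β)_n (1 - c)^(-β-k) ∑_{j ≤ n} (-1)^j C(n, j) (j + β)_k`.
Up to the sign `(-1)^n`, the last sum is the `n`-th forward difference at `0` of a polynomial of
degree `k`: it vanishes for `k < n` and equals `(-1)^n n!` for `k = n`. As `π_p` is monic of degree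
`p ≤ n`, expanding it in the monic basis `(x + β)_k` leaves only the coefficient of `(x + β)_n`,
which is `δ_{np}`.
-/

open Complex Finset Filter Topology

/-- Pochhammer symbol `(a)_k = a (a+1) ⋯ (a+k-1)`. -/
noncomputable def poch (a : ℂ) (k : ℕ) : ℂ := ∏ i ∈ Finset.range k, (a + i)

/-- The Meixner polynomial `m_n(z; β, c)`. -/
noncomputable def meixner (β c : ℝ) (n : ℕ) (z : ℂ) : ℂ :=
  poch (β : ℂ) n * ∑ k ∈ Finset.range (n + 1),
    poch (-(n : ℂ)) k * poch (-z) k / (poch (β : ℂ) k * (Nat.factorial k : ℂ))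
      * (1 - 1 / (c : ℂ)) ^ k

/-- The monic Meixner polynomial `π_n(z) := (1 − 1/c)^{−n} m_n(z; β, c)`. -/
noncomputable def meixnerMonic (β c : ℝ) (n : ℕ) (z : ℂ) : ℂ :=
  (1 - 1 / (c : ℂ)) ^ (-(n : ℤ)) * meixner β c n z

/-- The weight `w(x) := Γ(x+β) cˣ / Γ(x+1)`. -/
noncomputable def weight (β c : ℝ) (s : ℂ) : ℂ :=
  Complex.Gamma (s + (β : ℂ)) * (c : ℂ) ^ s / Complex.Gamma (s + 1)

/-- `γ_n² := (1−c)^{2n+β} c^{−n} / (Γ(n+β) Γ(n+1))`. -/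
noncomputable def gammaSq (β c : ℝ) (n : ℕ) : ℝ :=
  (1 - c) ^ (2 * (n : ℝ) + β) * c ^ (-(n : ℤ)) / (Real.Gamma ((n : ℝ) + β) * Real.Gamma ((n : ℝ) + 1))

open Polynomial
open scoped Nat

lemma poch_eq_eval_ascPochhammer (a : ℂ) (k : ℕ) : poch a k = (ascPochhammer ℂ k).eval a := by
  induction k with
  | zero => simp [poch]
  | succ k ih => rw [poch, Finset.prod_range_succ, ← poch, ih, ascPochhammer_succ_eval]

lemma poch_add (a : ℂ) (m k : ℕ) : poch a (m + k) = poch a m * poch (a + m) k := by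
  simp only [poch, Finset.prod_range_add, Nat.cast_add, add_assoc]

lemma poch_mul_poch_add_comm (a : ℂ) (m k : ℕ) :
    poch a m * poch (a + m) k = poch a k * poch (a + k) m := by
  rw [← poch_add, ← poch_add, add_comm]

lemma poch_ne_zero {a : ℂ} (ha : 0 < a.re) (k : ℕ) : poch a k ≠ 0 :=
  Finset.prod_ne_zero_iff.2 fun i _ h ↦ by
    have := congrArg Complex.re h
    simp only [Complex.add_re, Complex.natCast_re, Complex.zero_re] at this
    linarith [(i.cast_nonneg : (0 : ℝ) ≤ i)]

lemma poch_neg_natCast (x m : ℕ) : poch (-x) m = (-1) ^ m * x.descFactorial m := by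
  rw [poch_eq_eval_ascPochhammer, ascPochhammer_eval_neg_eq_descPochhammer,
    descPochhammer_eval_eq_descFactorial]

lemma poch_neg_natCast_of_lt {x m : ℕ} (h : x < m) : poch (-x) m = 0 := by
  simp [poch_neg_natCast, Nat.descFactorial_eq_zero_iff_lt.2 h]

lemma poch_neg_natCast_div_factorial (n j : ℕ) :
    poch (-n) j / j ! = (-1) ^ j * n.choose j := by
  have : (j ! : ℂ) ≠ 0 := Nat.cast_ne_zero.2 j.factorial_ne_zero
  rw [poch_neg_natCast, Nat.descFactorial_eq_factorial_mul_choose]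
  push_cast
  field_simp

lemma poch_neg_natCast_add_mul_factorial (y j : ℕ) :
    poch (-(y + j : ℕ)) j * y ! = (-1) ^ j * (y + j) ! := by
  rw [poch_neg_natCast, ← Nat.factorial_mul_descFactorial (Nat.le_add_left j y),
    Nat.add_sub_cancel]
  push_cast
  ring

lemma Complex.Gamma_add_natCast_eq_mul_poch {a : ℂ} (ha : 0 < a.re) (x : ℕ) :
    Gamma (a + x) = Gamma a * poch a x := by
  have hΓ := Gamma_add_nat_div_Gamma_eq (n := x) a fun k h ↦ by
    have := congrArg re h
    simp only [neg_re, natCast_re] at this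
    linarith [(k.cast_nonneg : (0 : ℝ) ≤ k)]
  rwa [← poch_eq_eval_ascPochhammer, div_eq_iff (Gamma_ne_zero_of_re_pos ha), mul_comm] at hΓ

lemma hasSum_poch_mul_pow_div_factorial (a : ℂ) {z : ℂ} (hz : ‖z‖ < 1) :
    HasSum (fun k ↦ poch a k * z ^ k / k !) ((1 - z) ^ (-a)) := by
  have h := (Complex.one_div_one_sub_cpow_hasFPowerSeriesOnBall_zero a).hasSum
    (y := z) (by simpa [enorm_eq_nnnorm, ← NNReal.coe_lt_one] using hz)
  simp only [zero_add, FormalMultilinearSeries.ofScalars_apply_eq, smul_eq_mul] at h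
  rw [Complex.cpow_neg, ← one_div]
  refine h.congr_fun fun k ↦ ?_
  rw [← Ring.multichoose_eq, poch_eq_eval_ascPochhammer, ← ascPochhammer_smeval_eq_eval,
    ← Ring.factorial_nsmul_multichoose_eq_ascPochhammer, nsmul_eq_mul, mul_assoc,
    mul_div_cancel_left₀ _ (Nat.cast_ne_zero.2 k.factorial_ne_zero)]

lemma hasSum_poch_neg_mul_poch_mul_pow_div_factorial (a : ℂ) {z : ℂ} (hz : ‖z‖ < 1) (j : ℕ) :
    HasSum (fun x : ℕ ↦ poch (-x) j * poch a x * z ^ x / x !)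
      (poch a j * (-z / (1 - z)) ^ j * (1 - z) ^ (-a)) := by
  have hz1 : 1 - z ≠ 0 := by
    intro h
    rw [← sub_eq_zero.1 h, norm_one] at hz
    exact lt_irrefl _ hz
  have hval : poch a j * (-z / (1 - z)) ^ j * (1 - z) ^ (-a)
      = poch a j * (-z) ^ j * (1 - z) ^ (-(a + j)) := by
    rw [neg_add, Complex.cpow_add _ _ hz1, Complex.cpow_neg (x := 1 - z) (y := (j : ℂ)),
      Complex.cpow_natCast, div_pow]
    field_simp
  -- `(-x)_j = 0` for `x < j`; after the shift `x = y + j` this is the binomial series for `a + j`.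
  rw [hval, ← hasSum_nat_add_iff' j, Finset.sum_eq_zero fun x hx ↦ by
    rw [poch_neg_natCast_of_lt (Finset.mem_range.1 hx), zero_mul, zero_mul, zero_div], sub_zero]
  refine ((hasSum_poch_mul_pow_div_factorial (a + j) hz).mul_left
    (poch a j * (-z) ^ j)).congr_fun fun y ↦ ?_
  have hy : (y ! : ℂ) ≠ 0 := Nat.cast_ne_zero.2 y.factorial_ne_zero
  have hyj : ((y + j) ! : ℂ) ≠ 0 := Nat.cast_ne_zero.2 (y + j).factorial_ne_zero
  rw [add_comm y j, poch_add, pow_add, add_comm j y, neg_pow]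
  field_simp
  linear_combination (poch a j * poch (a + j) y * z ^ y * z ^ j) *
    poch_neg_natCast_add_mul_factorial y j

namespace Polynomial

variable {R : Type*} [CommRing R]

lemma IsMonicOfDegree.coeff_self {P : R[X]} {n : ℕ} (hP : IsMonicOfDegree P n) : P.coeff n = 1 :=
  hP.natDegree_eq ▸ hP.monic.coeff_natDegree

lemma sum_range_neg_one_pow_mul_choose_mul_eval (P : R[X]) (n : ℕ) :
    ∑ j ∈ Finset.range (n + 1), (-1) ^ j * n.choose j * P.eval (j : R)
      = (-1) ^ n * (fwdDiff 1)^[n] P.eval 0 := by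
  rw [fwdDiff_iter_eq_sum_shift, Finset.mul_sum]
  refine Finset.sum_congr rfl fun j hj ↦ ?_
  obtain ⟨m, rfl⟩ := Nat.exists_eq_add_of_le (Nat.lt_succ_iff.1 (Finset.mem_range.1 hj))
  simp only [Nat.add_sub_cancel_left, zsmul_eq_mul, nsmul_eq_mul, mul_one, zero_add, pow_add]
  push_cast
  have hsq : ((-1 : R) ^ m) * (-1) ^ m = 1 := by rw [← mul_pow]; simp
  linear_combination (-(-1) ^ j * (j + m).choose j * P.eval (j : R)) * hsq

lemma sum_range_neg_one_pow_mul_choose_mul_eval_of_natDegree_le {P : R[X]} {n : ℕ}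
    (hP : P.natDegree ≤ n) :
    ∑ j ∈ Finset.range (n + 1), (-1) ^ j * n.choose j * P.eval (j : R)
      = (-1) ^ n * n ! * P.coeff n := by
  rw [sum_range_neg_one_pow_mul_choose_mul_eval]
  rcases hP.lt_or_eq with hlt | rfl
  · simp [fwdDiff_iter_eq_zero_of_degree_lt hlt, coeff_eq_zero_of_natDegree_lt hlt]
  · rw [fwdDiff_iter_degree_eq_factorial]
    simp only [Pi.smul_apply, Pi.natCast_apply, smul_eq_mul, coeff_natDegree]
    ring

lemma exists_eq_sum_smul_of_isMonicOfDegree {P : ℕ → R[X]} (hP : ∀ k, IsMonicOfDegree (P k) k)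
    {Q : R[X]} {d : ℕ} (hQ : Q.natDegree ≤ d) :
    ∃ a : ℕ → R, Q = ∑ k ∈ Finset.range (d + 1), a k • P k := by
  induction d generalizing Q with
  | zero =>
    refine ⟨fun _ ↦ Q.coeff 0, ?_⟩
    rw [Finset.sum_range_one, isMonicOfDegree_zero_iff.1 (hP 0), smul_eq_C_mul, mul_one]
    exact eq_C_of_natDegree_le_zero hQ
  | succ d ih =>
    have hlow : (Q - Q.coeff (d + 1) • P (d + 1)).natDegree ≤ d := by
      refine natDegree_le_iff_coeff_eq_zero.2 fun N hN ↦ ?_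
      rw [coeff_sub, coeff_smul, smul_eq_mul]
      obtain rfl | hlt := (Nat.succ_le_of_lt hN).eq_or_lt
      · rw [(hP _).coeff_self, mul_one, sub_self]
      · rw [coeff_eq_zero_of_natDegree_lt (hQ.trans_lt hlt),
          coeff_eq_zero_of_natDegree_lt ((hP _).natDegree_eq.trans_lt hlt), mul_zero, sub_zero]
    obtain ⟨a, ha⟩ := ih hlow
    refine ⟨Function.update a (d + 1) (Q.coeff (d + 1)), ?_⟩
    rw [Finset.sum_range_succ, Function.update_self, Finset.sum_congr rfl fun k hk ↦ by
      rw [Function.update_of_ne (Finset.mem_range.1 hk).ne], ← ha, sub_add_cancel]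

lemma isMonicOfDegree_sum_C_mul [Nontrivial R] {P : ℕ → R[X]}
    (hP : ∀ k, IsMonicOfDegree (P k) k) {b : ℕ → R} {d : ℕ} (hb : b d = 1) :
    IsMonicOfDegree (∑ k ∈ Finset.range (d + 1), C (b k) * P k) d := by
  refine (isMonicOfDegree_iff _ _).2 ⟨natDegree_sum_le_of_forall_le _ _ fun k hk ↦
    (natDegree_C_mul_le _ _).trans ((hP k).natDegree_eq.trans_le
      (Nat.lt_succ_iff.1 (Finset.mem_range.1 hk))), ?_⟩
  rw [finsetSum_coeff, Finset.sum_eq_single_of_mem d (Finset.self_mem_range_succ d)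
    fun k hk hkd ↦ by rw [coeff_C_mul, coeff_eq_zero_of_natDegree_lt ((hP k).natDegree_eq.trans_lt
      ((Nat.lt_succ_iff.1 (Finset.mem_range.1 hk)).lt_of_ne hkd)), mul_zero]]
  rw [coeff_C_mul, hb, one_mul, (hP d).coeff_self]

lemma isMonicOfDegree_ascPochhammer_comp_X_add_C [Nontrivial R] [NoZeroDivisors R] (r : R)
    (k : ℕ) : IsMonicOfDegree ((ascPochhammer R k).comp (X + C r)) k := by
  simpa using IsMonicOfDegree.comp one_ne_zero
    ⟨ascPochhammer_natDegree R k, monic_ascPochhammer R k⟩ (isMonicOfDegree_X_add_one r)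

end Polynomial

lemma weight_natCast {β : ℝ} (hβ : 0 < β) (c : ℝ) (x : ℕ) :
    weight β c x = Complex.Gamma β * (poch β x * c ^ x / x !) := by
  rw [weight, add_comm, Complex.Gamma_add_natCast_eq_mul_poch (by simpa), Complex.cpow_natCast,
    Complex.Gamma_nat_eq_factorial]
  ring

lemma exists_isMonicOfDegree_meixnerMonic_eq_eval {β c : ℝ} (hc : c ≠ 1) (hβ : 0 < β) (p : ℕ) :
    ∃ P : ℂ[X], IsMonicOfDegree P p ∧ ∀ z, meixnerMonic β c p z = P.eval z := by
  set t : ℂ := 1 - 1 / c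
  have ht : t ≠ 0 := by
    simp only [t, sub_ne_zero, ne_eq, eq_comm (a := (1 : ℂ)), one_div, inv_eq_one]
    exact_mod_cast hc
  set b : ℕ → ℂ := fun j ↦ t ^ (-(p : ℤ)) * poch β p * (poch (-p) j / j !) * t ^ j * (-1) ^ j /
    poch β j
  refine ⟨∑ j ∈ Finset.range (p + 1), C (b j) * descPochhammer ℂ j,
    isMonicOfDegree_sum_C_mul (fun k ↦ ⟨descPochhammer_natDegree ℂ k, monic_descPochhammer ℂ k⟩)
      ?_, fun z ↦ ?_⟩
  · calc b p = (t ^ (-(p : ℤ)) * t ^ p) * (poch β p / poch β p) * ((-1) ^ p * (-1) ^ p) := by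
          simp only [b, poch_neg_natCast_div_factorial, Nat.choose_self, Nat.cast_one]
          ring
      _ = 1 := by
          rw [zpow_neg, zpow_natCast, inv_mul_cancel₀ (pow_ne_zero _ ht),
            div_self (poch_ne_zero (by simpa) p), ← mul_pow, neg_one_mul, neg_neg, one_pow,
            mul_one, one_mul]
  · simp only [meixnerMonic, meixner, eval_finsetSum, eval_mul, eval_C, Finset.mul_sum, b,
      poch_eq_eval_ascPochhammer (-z), ascPochhammer_eval_neg_eq_descPochhammer]
    refine Finset.sum_congr rfl fun j _ ↦ ?_
    ring

section Moments

variable {β c : ℝ}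

lemma hasSum_meixner_mul_poch_mul_weight (hc0 : 0 < c) (hc1 : c < 1) (hβ : 0 < β) (n k : ℕ) :
    HasSum (fun x : ℕ ↦ meixner β c n x * poch (x + β) k * weight β c x)
      (poch β n * Complex.Gamma β * (1 - c) ^ (-((β : ℂ) + k)) *
        ∑ j ∈ Finset.range (n + 1), (-1) ^ j * n.choose j * poch (j + β) k) := by
  -- `(β)_x (x + β)_k = (β)_k (β + k)_x`, so each term of `m_n` yields a shifted binomial series in
  -- `β + k`; its factor `(-c / (1 - c))^j` cancels the `(1 - 1/c)^j` of `m_n`.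
  set t : ℂ := 1 - 1 / c
  set K : ℕ → ℂ := fun j ↦ poch β n * Complex.Gamma β * poch β k *
    (poch (-n) j * t ^ j / (poch β j * j !))
  have hc : ‖(c : ℂ)‖ < 1 := by simpa [abs_of_pos hc0] using hc1
  have hterm : ∀ x : ℕ, meixner β c n x * poch (x + β) k * weight β c x
      = ∑ j ∈ Finset.range (n + 1), K j * (poch (-x) j * poch (β + k) x * c ^ x / x !) := by
    intro x
    rw [meixner, weight_natCast hβ, add_comm (x : ℂ), Finset.mul_sum, Finset.sum_mul,
      Finset.sum_mul]
    refine Finset.sum_congr rfl fun j _ ↦ ?_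
    linear_combination (poch β n * Complex.Gamma β * (poch (-n) j * t ^ j / (poch β j * j !)) *
      (poch (-x) j * c ^ x / x !)) * (poch_mul_poch_add_comm (β : ℂ) x k)
  have hval : ∑ j ∈ Finset.range (n + 1),
      K j * (poch (β + k) j * (-c / (1 - c)) ^ j * (1 - c) ^ (-((β : ℂ) + k)))
      = poch β n * Complex.Gamma β * (1 - c) ^ (-((β : ℂ) + k)) *
        ∑ j ∈ Finset.range (n + 1), (-1) ^ j * n.choose j * poch (j + β) k := by
    rw [Finset.mul_sum]
    refine Finset.sum_congr rfl fun j _ ↦ ?_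
    have ht : t * (-c / (1 - c)) = 1 := by
      have : (c : ℂ) ≠ 0 := by exact_mod_cast hc0.ne'
      have : (1 - c : ℂ) ≠ 0 := by exact_mod_cast (sub_pos.2 hc1).ne'
      simp only [t]
      field_simp
      ring
    calc K j * (poch (β + k) j * (-c / (1 - c)) ^ j * (1 - c) ^ (-((β : ℂ) + k)))
        = poch β n * Complex.Gamma β * (1 - c) ^ (-((β : ℂ) + k)) * (poch (-n) j / j !) *
            (poch β k * poch (β + k) j / poch β j) * (t * (-c / (1 - c))) ^ j := by
          simp only [K, mul_pow]
          ring
      _ = _ := by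
          rw [poch_neg_natCast_div_factorial, poch_mul_poch_add_comm, ht, one_pow,
            mul_div_cancel_left₀ _ (poch_ne_zero (by simpa) j), add_comm (j : ℂ)]
          ring
  rw [← hval]
  exact (hasSum_sum fun j (_ : j ∈ Finset.range (n + 1)) ↦
    (hasSum_poch_neg_mul_poch_mul_pow_div_factorial (β + k) hc j).mul_left (K j)).congr_fun hterm

lemma hasSum_meixner_mul_eval_mul_weight (hc0 : 0 < c) (hc1 : c < 1) (hβ : 0 < β) {n : ℕ}
    {Q : ℂ[X]} (hQ : Q.natDegree ≤ n) :
    HasSum (fun x : ℕ ↦ meixner β c n x * Q.eval (x : ℂ) * weight β c x)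
      (poch β n * Complex.Gamma β * (1 - c) ^ (-((β : ℂ) + n)) * (-1) ^ n * n ! * Q.coeff n) := by
  set P : ℕ → ℂ[X] := fun k ↦ (ascPochhammer ℂ k).comp (X + C (β : ℂ))
  have hP (k : ℕ) : IsMonicOfDegree (P k) k := isMonicOfDegree_ascPochhammer_comp_X_add_C _ k
  have hbasis (k : ℕ) (hk : k ≤ n) :
      HasSum (fun x : ℕ ↦ meixner β c n x * (P k).eval (x : ℂ) * weight β c x)
        (poch β n * Complex.Gamma β * (1 - c) ^ (-((β : ℂ) + n)) * (-1) ^ n * n ! *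
          (P k).coeff n) := by
    have hsum := hasSum_meixner_mul_poch_mul_weight hc0 hc1 hβ n k
    have hcoeff := sum_range_neg_one_pow_mul_choose_mul_eval_of_natDegree_le
      ((hP k).natDegree_eq.trans_le hk)
    simp only [P, eval_comp, eval_add, eval_X, eval_C, ← poch_eq_eval_ascPochhammer]
      at hsum hcoeff ⊢
    rw [hcoeff] at hsum
    obtain rfl | hlt := hk.eq_or_lt
    · convert hsum using 1
      ring
    · rw [coeff_eq_zero_of_natDegree_lt ((hP k).natDegree_eq.trans_lt hlt)] at hsum ⊢
      simpa using hsum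
  obtain ⟨a, rfl⟩ := exists_eq_sum_smul_of_isMonicOfDegree hP hQ
  have hterm (x : ℕ) : meixner β c n x * (∑ k ∈ Finset.range (n + 1), a k • P k).eval (x : ℂ) *
      weight β c x = ∑ k ∈ Finset.range (n + 1),
        a k * (meixner β c n x * (P k).eval (x : ℂ) * weight β c x) := by
    simp only [eval_finsetSum, eval_smul, smul_eq_mul, Finset.mul_sum, Finset.sum_mul]
    exact Finset.sum_congr rfl fun k _ ↦ by ring
  rw [finsetSum_coeff, Finset.mul_sum]
  simp only [coeff_smul, smul_eq_mul, mul_left_comm _ (a _)]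
  exact (hasSum_sum fun k hk ↦ (hbasis k (Nat.lt_succ_iff.1 (Finset.mem_range.1 hk))).mul_left
    (a k)).congr_fun hterm

end Moments

lemma ofReal_one_div_gammaSq {β c : ℝ} (hc0 : 0 < c) (hc1 : c < 1) (hβ : 0 < β) (n : ℕ) :
    ((1 / gammaSq β c n : ℝ) : ℂ) = (1 - 1 / c) ^ (-(n : ℤ)) *
      (poch β n * Complex.Gamma β * (1 - c) ^ (-((β : ℂ) + n)) * (-1) ^ n * n !) := by
  have hu : (1 - (c : ℂ)) ≠ 0 := by exact_mod_cast (sub_pos.2 hc1).ne'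
  have hpow : (((1 - c) ^ (2 * (n : ℝ) + β) : ℝ) : ℂ)
      = (1 - (c : ℂ)) ^ n * (1 - (c : ℂ)) ^ n * (1 - (c : ℂ)) ^ (β : ℂ) := by
    rw [Complex.ofReal_cpow (sub_pos.2 hc1).le]
    push_cast
    rw [Complex.cpow_add _ _ hu, two_mul, Complex.cpow_add _ _ hu, Complex.cpow_natCast]
  have hneg : (1 - (c : ℂ)) ^ (-((β : ℂ) + n))
      = ((1 - (c : ℂ)) ^ (β : ℂ))⁻¹ * ((1 - (c : ℂ)) ^ n)⁻¹ := by
    rw [Complex.cpow_neg, Complex.cpow_add _ _ hu, Complex.cpow_natCast, mul_inv]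
  have hΓ : ((Real.Gamma (n + β) : ℝ) : ℂ) = Complex.Gamma β * poch β n := by
    rw [← Complex.Gamma_ofReal, add_comm]
    push_cast
    exact Complex.Gamma_add_natCast_eq_mul_poch (by simpa) n
  have hfact : ((Real.Gamma (n + 1) : ℝ) : ℂ) = n ! := by
    rw [← Complex.Gamma_ofReal]
    push_cast
    exact Complex.Gamma_nat_eq_factorial n
  simp only [gammaSq]
  push_cast
  have hc : (c : ℂ) ≠ 0 := by exact_mod_cast hc0.ne'
  have ht : 1 - 1 / (c : ℂ) = -(1 - c) / c := by field_simp; ring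
  rw [hpow, hneg, hΓ, hfact, zpow_neg, zpow_natCast, zpow_neg, zpow_natCast, ht, div_pow, neg_pow]
  have := poch_ne_zero (a := β) (by simpa) n
  have := Complex.Gamma_ne_zero_of_re_pos (s := β) (by simpa)
  field_simp

/-- Orthogonality of the monic Meixner polynomials:
`Σ_{k=0}^{∞} π_n(k) π_p(k) w(k) = δ_{np}/γ_n²`. -/
theorem meixnerMonic_orthogonality (c β : ℝ) (hc0 : 0 < c) (hc1 : c < 1) (hβ : 0 < β)
    (n p : ℕ) :
    HasSum
      (fun k : ℕ => meixnerMonic β c n (k : ℂ) * meixnerMonic β c p (k : ℂ) * weight β c (k : ℂ))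
      (if n = p then ((1 / gammaSq β c n : ℝ) : ℂ) else 0) := by
  wlog hpn : p ≤ n generalizing n p
  · have := this p n (by omega)
    rw [if_neg (by omega)] at this ⊢
    exact this.congr_fun fun x ↦ by ring
  obtain ⟨P, hP, hPeval⟩ := exists_isMonicOfDegree_meixnerMonic_eq_eval hc1.ne hβ p
  have := (hasSum_meixner_mul_eval_mul_weight hc0 hc1 hβ (hP.natDegree_eq.trans_le hpn)).mul_left
    ((1 - 1 / (c : ℂ)) ^ (-(n : ℤ)))
  rw [hP.coeff_eq (isMonicOfDegree_X_pow ℂ p) hpn, coeff_X_pow, ← mul_assoc,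
    ← ofReal_one_div_gammaSq hc0 hc1 hβ, mul_ite, mul_one, mul_zero] at this
  exact this.congr_fun fun x ↦ by rw [hPeval, meixnerMonic]; ring
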